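/- Let N ≥ 3 be odd and φ ∈ ℝ^N. The number of local minima of F_φ (with θ_N = 0 fixed) whose coordinates θ_1,…,θ_{N−1} lie in the fundamental domain (−π, π] is at most N. -/

import Mathlib

open Real Filter

/-- The variable `s k = φ k + θ (k+1) - θ k` (indices cyclic mod `N`,
0-based; paper index `k` corresponds to `k-1` here, so `s_N` is `sVar` at `lastIdx`). -/
noncomputable def sVar (N : ℕ) (hN : 0 < N) (φ θ : Fin N → ℝ) (k : Fin N) : ℝ :=
  φ k + θ ⟨((k : ℕ) + 1) % N, Nat.mod_lt _ hN⟩ - θ k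

/-- The lattice Landau gauge functional / random phase XY Hamiltonian
`F_φ(θ) = Σ_k (1 - cos(φ_k + θ_{k+1} - θ_k))` with periodic boundary conditions. -/
noncomputable def Fxy (N : ℕ) (hN : 0 < N) (φ θ : Fin N → ℝ) : ℝ :=
  ∑ k : Fin N, (1 - Real.cos (sVar N hN φ θ k))

/-- The index of the fixed site (paper site `N`). -/
def lastIdx (N : ℕ) (hN : 0 < N) : Fin N :=
  ⟨N - 1, Nat.sub_lt hN Nat.one_pos⟩

/-- `θ` is a stationary point of `F_φ` regarded as a function of the free
coordinates `θ_1, …, θ_{N-1}` (0-based: coordinates `k` with `k < N-1`),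
with `θ` at `lastIdx` held fixed: all partial derivatives vanish. -/
noncomputable def IsStationaryPt (N : ℕ) (hN : 0 < N) (φ θ : Fin N → ℝ) : Prop :=
  ∀ k : Fin N, (k : ℕ) < N - 1 →
    deriv (fun t : ℝ => Fxy N hN φ (Function.update θ k t)) (θ k) = 0

/-- The `(N-1) × (N-1)` tridiagonal matrix with entries
`δ_{ij}(c_{i-1} + c_i) - δ_{i-1,j} c_{i-1} - δ_{i+1,j} c_i`, where indices are
0-based (paper index `i` ↦ `i-1`) and `c_0 := c_N` (cyclic predecessor). -/
noncomputable def hessC (N : ℕ) (hN : 0 < N) (c : Fin N → ℝ) :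
    Matrix (Fin (N - 1)) (Fin (N - 1)) ℝ :=
  Matrix.of fun i j =>
    (if i = j then
        c ⟨((i : ℕ) + (N - 1)) % N, Nat.mod_lt _ hN⟩ +
          c ⟨(i : ℕ), lt_of_lt_of_le i.isLt (Nat.sub_le N 1)⟩
      else 0)
    - (if (i : ℕ) = (j : ℕ) + 1 then c ⟨((i : ℕ) + (N - 1)) % N, Nat.mod_lt _ hN⟩ else 0)
    - (if (j : ℕ) = (i : ℕ) + 1 then c ⟨(i : ℕ), lt_of_lt_of_le i.isLt (Nat.sub_le N 1)⟩ else 0)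

/-- The Hessian of `F_φ` (with the last coordinate fixed) at a configuration `θ`. -/
noncomputable def hessAt (N : ℕ) (hN : 0 < N) (φ θ : Fin N → ℝ) :
    Matrix (Fin (N - 1)) (Fin (N - 1)) ℝ :=
  hessC N hN fun k => Real.cos (sVar N hN φ θ k)

/-- `F_φ` as a function of the free coordinates only: the coordinate at
`lastIdx` is overwritten by `0`. -/
noncomputable def FxyFixed (N : ℕ) (hN : 0 < N) (φ : Fin N → ℝ) (η : Fin N → ℝ) : ℝ :=
  Fxy N hN φ (Function.update η (lastIdx N hN) 0)

/-- The value `σ = (Φ + 2πl - π Σ_{k=1}^{N-1} q_k) / (1 + Σ_{k=1}^{N-1} (-1)^{q_k})`. -/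
noncomputable def sigmaVal (N : ℕ) (hN : 0 < N) (φ : Fin N → ℝ) (q : Fin N → ℕ) (l : ℤ) : ℝ :=
  ((∑ k, φ k) + 2 * Real.pi * (l : ℝ)
      - Real.pi * ∑ k ∈ Finset.univ.erase (lastIdx N hN), (q k : ℝ)) /
    (1 + ∑ k ∈ Finset.univ.erase (lastIdx N hN), (-1 : ℝ) ^ (q k))

/-!
At a local minimum `θ`, write `s_k = φ_k + θ_{k+1} - θ_k`. Moving along `θ + t v` with `v_N = 0`
changes `s` by an arbitrary `Δ` with `∑ Δ_k = 0`, so the first- and second-order conditions give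
`∑ sin s_k Δ_k = 0` and `∑ cos s_k Δ_k² ≥ 0` for all such `Δ`. The first makes all `sin s_k`
equal, hence all `|cos s_k|` equal; the second then rules out a negative `cos s_k` when `N ≥ 3`.
So all `s_k` coincide modulo `2π` with an angle `ψ`, and since the `s_k` telescope, `N ψ = ∑ φ_k`
modulo `2π`: there are `N` choices of `ψ`, and `ψ` determines `θ` in the fundamental domain.
-/

open Topology

theorem IsLocalMin.nonneg_of_hasDerivAt_of_hasDerivAt {f f' : ℝ → ℝ} {a K : ℝ}
    (hmin : IsLocalMin f a) (hf : ∀ x, HasDerivAt f (f' x) x) (hf' : HasDerivAt f' K a) :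
    0 ≤ K := by
  by_contra! hK
  have hf'a : f' a = 0 := (hf a).deriv ▸ hmin.deriv_eq_zero
  have hneg : ∀ᶠ x in 𝓝[>] a, f' x < 0 := by
    filter_upwards [nhdsGT_le_nhdsNE a ((hasDerivAt_iff_tendsto_slope.mp hf').eventually
      (eventually_lt_nhds hK)), self_mem_nhdsWithin] with x hslope (hx : a < x)
    simpa [slope_def_field, hf'a, div_neg_iff, hx, hx.not_gt] using hslope
  obtain ⟨b, hab, hb⟩ := mem_nhdsGT_iff_exists_Ioo_subset.mp
    (hneg.and (nhdsWithin_le_nhds hmin))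
  obtain ⟨m, ham, hmb⟩ := exists_between (Set.mem_Ioi.mp hab)
  obtain ⟨c, hc, hfc⟩ := exists_hasDerivAt_eq_slope f f' ham
    (fun x _ => (hf x).continuousAt.continuousWithinAt) (fun x _ => hf x)
  have hmean : 0 ≤ (f m - f a) / (m - a) :=
    div_nonneg (sub_nonneg.mpr (hb ⟨ham, hmb⟩).2) (sub_nonneg.mpr ham.le)
  linarith [(hb ⟨hc.1, hc.2.trans hmb⟩).1]

theorem Fin.exists_sub_eq_of_sum_eq_zero {M : Type*} [AddCommGroup M] {n : ℕ}
    (Δ : Fin (n + 1) → M) (hΔ : ∑ k, Δ k = 0) :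
    ∃ v : Fin (n + 1) → M, v (Fin.last n) = 0 ∧ ∀ k, v (k + 1) - v k = Δ k := by
  set u := Fin.partialSum fun i : Fin n => Δ i.castSucc
  refine ⟨fun j => u j - u (Fin.last n), sub_self _, fun k => ?_⟩
  induction k using Fin.lastCases with
  | last =>
    have hu : u (Fin.last n) = ∑ i : Fin n, Δ i.castSucc := by
      simp [u, Fin.partialSum, List.take_of_length_le, List.sum_ofFn]
    rw [Fin.sum_univ_castSucc, ← hu] at hΔ
    simp only [Fin.last_add_one, show u 0 = 0 from Fin.partialSum_zero _,
      ← neg_eq_of_add_eq_zero_right hΔ]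
    abel
  | cast i =>
    simp only [Fin.coeSucc_eq_succ, u, Fin.partialSum_succ]
    abel

theorem Fin.apply_eq_apply_last_of_apply_add_one_eq {α : Type*} {n : ℕ} {f : Fin (n + 1) → α}
    (h : ∀ k, f (k + 1) = f k) (j : Fin (n + 1)) : f j = f (Fin.last n) := by
  have h0 : f 0 = f (Fin.last n) := by rw [← Fin.last_add_one, h]
  induction j using Fin.induction with
  | zero => exact h0
  | succ i ih => rw [← Fin.coeSucc_eq_succ, h, ih]

section SumOfCosines

variable {ι : Type*} [Fintype ι]

theorem hasDerivAt_sum_one_sub_cos (s d : ι → ℝ) (t : ℝ) :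
    HasDerivAt (fun t => ∑ k, (1 - cos (s k + t * d k)))
      (∑ k, sin (s k + t * d k) * d k) t := by
  refine HasDerivAt.fun_sum fun k _ => ?_
  simpa using (((hasDerivAt_id t).mul_const (d k)).const_add (s k)).cos.const_sub 1

theorem hasDerivAt_sum_sin_mul (s d : ι → ℝ) (t : ℝ) :
    HasDerivAt (fun t => ∑ k, sin (s k + t * d k) * d k)
      (∑ k, cos (s k + t * d k) * d k ^ 2) t := by
  refine HasDerivAt.fun_sum fun k _ => ?_
  simpa [pow_two, mul_assoc] using
    ((((hasDerivAt_id t).mul_const (d k)).const_add (s k)).sin.mul_const (d k))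

variable {s d : ι → ℝ}

theorem IsLocalMin.sum_sin_mul_eq_zero
    (h : IsLocalMin (fun t => ∑ k, (1 - cos (s k + t * d k))) 0) :
    ∑ k, sin (s k) * d k = 0 := by
  simpa using h.hasDerivAt_eq_zero (hasDerivAt_sum_one_sub_cos s d 0)

theorem IsLocalMin.sum_cos_mul_sq_nonneg
    (h : IsLocalMin (fun t => ∑ k, (1 - cos (s k + t * d k))) 0) :
    0 ≤ ∑ k, cos (s k) * d k ^ 2 := by
  simpa using h.nonneg_of_hasDerivAt_of_hasDerivAt (hasDerivAt_sum_one_sub_cos s d)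
    (hasDerivAt_sum_sin_mul s d 0)

end SumOfCosines

section QuadraticFormOnSumZero

variable {ι : Type*} [Fintype ι] [DecidableEq ι]

theorem eq_of_forall_sum_mul_eq_zero {x : ι → ℝ}
    (h : ∀ Δ : ι → ℝ, ∑ k, Δ k = 0 → ∑ k, x k * Δ k = 0) (i j : ι) : x i = x j := by
  have := h (Pi.single i 1 - Pi.single j 1) (by simp [Finset.sum_sub_distrib])
  simpa [Pi.single_apply, mul_sub, Finset.sum_sub_distrib, sub_eq_zero] using this

variable {c : ι → ℝ}

theorem eq_of_neg_of_forall_sum_mul_sq_nonneg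
    (h : ∀ Δ : ι → ℝ, ∑ k, Δ k = 0 → 0 ≤ ∑ k, c k * Δ k ^ 2) {i j : ι}
    (hi : c i < 0) (hj : c j < 0) : i = j := by
  by_contra hij
  have hquad := h (Pi.single i 1 - Pi.single j 1) (by simp)
  have : 0 ≤ c i + c j := by
    simpa [sub_sq, Pi.single_apply, Ne.symm hij, mul_add, mul_sub, Finset.sum_add_distrib,
      Finset.sum_sub_distrib] using hquad
  linarith

theorem nonneg_of_forall_sum_mul_sq_nonneg (hcard : 3 ≤ Fintype.card ι)
    (habs : ∀ i j, |c i| = |c j|)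
    (h : ∀ Δ : ι → ℝ, ∑ k, Δ k = 0 → 0 ≤ ∑ k, c k * Δ k ^ 2) (b : ι) : 0 ≤ c b := by
  by_contra! hb
  have hm : (3 : ℝ) ≤ Fintype.card ι := by exact_mod_cast hcard
  set m : ℝ := (Fintype.card ι : ℝ) with hm_def
  have hother : ∀ k, k ≠ b → c k = -c b := fun k hk => by
    rcases abs_eq_abs.mp (habs k b) with hkb | hkb
    · exact absurd (eq_of_neg_of_forall_sum_mul_sq_nonneg h (hkb ▸ hb) hb) hk
    · exact hkb
  -- `Δ = m • Pi.single b 1 - 1` gives `∑ k, c k * Δ k ^ 2 = c b * (m - 1) * (m - 2) < 0`.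
  set Δ : ι → ℝ := fun k => (if k = b then m else 0) - 1
  have hterm : ∀ k, c k * Δ k ^ 2 = -c b + if k = b then c b * ((m - 1) ^ 2 + 1) else 0 := by
    intro k
    by_cases hk : k = b
    · subst hk; simp only [Δ, if_true]; ring
    · simp only [Δ, hk, if_false, hother k hk]; ring
  have := h Δ (by simp [Δ, Finset.sum_sub_distrib, m])
  simp only [hterm, Finset.sum_add_distrib, Finset.sum_ite_eq', Finset.mem_univ, if_true,
    Finset.sum_const, Finset.card_univ, nsmul_eq_mul, ← hm_def] at this
  nlinarith [mul_pos (neg_pos.mpr hb)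
    (mul_pos (by linarith : (0 : ℝ) < m - 1) (by linarith : (0 : ℝ) < m - 2))]

theorem Real.Angle.finite_and_ncard_setOf_nsmul_eq_le {m : ℕ} (hm : m ≠ 0) (α : Angle) :
    {ψ : Angle | m • ψ = α}.Finite ∧ {ψ : Angle | m • ψ = α}.ncard ≤ m := by
  set f : Fin m → Angle := fun k =>
    ((α.toReal / m : ℝ) : Angle) + (k : ℕ) • ((2 * π / m : ℝ) : Angle)
  have hroot : m • ((α.toReal / m : ℝ) : Angle) = α := by
    rw [← Real.Angle.coe_nsmul, nsmul_eq_mul, mul_div_cancel₀ _ (Nat.cast_ne_zero.mpr hm),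
      Real.Angle.coe_toReal]
  have hsub : {ψ : Angle | m • ψ = α} ⊆ Set.range f := fun ψ hψ => by
    obtain ⟨k, hk⟩ := (Real.Angle.nsmul_eq_iff hm).mp (hroot ▸ hψ : m • ψ = m • _)
    exact ⟨k, hk.symm⟩
  refine ⟨(Set.finite_range f).subset hsub,
    (Set.ncard_le_ncard hsub (Set.finite_range f)).trans ?_⟩
  rw [← Set.image_univ]
  exact le_trans Set.ncard_image_le (by simp)

section XY

variable {n : ℕ} {hN : 0 < n + 1} {φ θ : Fin (n + 1) → ℝ}

theorem lastIdx_eq_last : lastIdx (n + 1) hN = Fin.last n := rfl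

theorem sVar_eq (k : Fin (n + 1)) : sVar (n + 1) hN φ θ k = φ k + θ (k + 1) - θ k := by
  have hk : (⟨((k : ℕ) + 1) % (n + 1), Nat.mod_lt _ hN⟩ : Fin (n + 1)) = k + 1 :=
    Fin.ext (by simp [Fin.val_add])
  rw [sVar, hk]

theorem sum_sVar : ∑ k, sVar (n + 1) hN φ θ k = ∑ k, φ k := by
  simp only [sVar_eq, Finset.sum_sub_distrib, Finset.sum_add_distrib]
  rw [Fintype.sum_equiv (Equiv.addRight 1) (fun k => θ (k + 1)) θ (fun _ => rfl),
    add_sub_cancel_right]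

theorem FxyFixed_add_smul {v : Fin (n + 1) → ℝ} (hθ : θ (Fin.last n) = 0)
    (hv : v (Fin.last n) = 0) (t : ℝ) :
    FxyFixed (n + 1) hN φ (θ + t • v) =
      ∑ k, (1 - cos (sVar (n + 1) hN φ θ k + t * (v (k + 1) - v k))) := by
  have hlast : (θ + t • v) (lastIdx (n + 1) hN) = 0 := by simp [lastIdx_eq_last, hθ, hv]
  rw [FxyFixed, ← hlast, Function.update_eq_self, Fxy]
  refine Finset.sum_congr rfl fun k _ => congrArg (1 - cos ·) ?_
  simp only [sVar_eq, Pi.add_apply, Pi.smul_apply, smul_eq_mul]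
  ring

theorem IsLocalMin.isLocalMin_sum_one_sub_cos_sVar
    (hmin : IsLocalMin (FxyFixed (n + 1) hN φ) θ) (hθ : θ (Fin.last n) = 0)
    {Δ : Fin (n + 1) → ℝ} (hΔ : ∑ k, Δ k = 0) :
    IsLocalMin (fun t => ∑ k, (1 - cos (sVar (n + 1) hN φ θ k + t * Δ k))) 0 := by
  obtain ⟨v, hv, hvΔ⟩ := Fin.exists_sub_eq_of_sum_eq_zero Δ hΔ
  have hline : IsLocalMin (fun t : ℝ => FxyFixed (n + 1) hN φ (θ + t • v)) 0 :=
    IsLocalMin.comp_continuous (f := FxyFixed (n + 1) hN φ) (g := fun t : ℝ => θ + t • v)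
      (by rwa [zero_smul, add_zero]) (by fun_prop)
  simpa only [FxyFixed_add_smul hθ hv, hvΔ] using hline

theorem IsLocalMin.coe_sVar_eq (hn : 2 ≤ n) (hmin : IsLocalMin (FxyFixed (n + 1) hN φ) θ)
    (hθ : θ (Fin.last n) = 0) (k : Fin (n + 1)) :
    (sVar (n + 1) hN φ θ k : Angle) = sVar (n + 1) hN φ θ 0 := by
  have hsin := eq_of_forall_sum_mul_eq_zero fun Δ hΔ =>
    (hmin.isLocalMin_sum_one_sub_cos_sVar hθ hΔ).sum_sin_mul_eq_zero
  have hcos := nonneg_of_forall_sum_mul_sq_nonneg (by simpa using hn)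
    (fun i j => by
      rw [abs_cos_eq_sqrt_one_sub_sin_sq, abs_cos_eq_sqrt_one_sub_sin_sq, hsin i j])
    fun Δ hΔ => (hmin.isLocalMin_sum_one_sub_cos_sVar hθ hΔ).sum_cos_mul_sq_nonneg
  refine Real.Angle.cos_sin_inj ?_ (hsin k 0)
  rw [← abs_of_nonneg (hcos k), ← abs_of_nonneg (hcos 0), abs_cos_eq_sqrt_one_sub_sin_sq,
    abs_cos_eq_sqrt_one_sub_sin_sq, hsin k 0]

theorem IsLocalMin.nsmul_coe_sVar_eq (hn : 2 ≤ n) (hmin : IsLocalMin (FxyFixed (n + 1) hN φ) θ)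
    (hθ : θ (Fin.last n) = 0) :
    (n + 1) • (sVar (n + 1) hN φ θ 0 : Angle) = (∑ k, φ k : ℝ) := by
  calc (n + 1) • (sVar (n + 1) hN φ θ 0 : Angle)
      = ∑ k, (sVar (n + 1) hN φ θ k : Angle) := by simp [hmin.coe_sVar_eq hn hθ]
    _ = (∑ k, sVar (n + 1) hN φ θ k : ℝ) := (map_sum Real.Angle.coeHom _ _).symm
    _ = (∑ k, φ k : ℝ) := by rw [sum_sVar]

theorem eq_of_coe_sVar_eq {θ' : Fin (n + 1) → ℝ} (hθ : θ (Fin.last n) = 0)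
    (hθ' : θ' (Fin.last n) = 0) (hdom : ∀ k, k ≠ Fin.last n → θ k ∈ Set.Ioc (-π) π)
    (hdom' : ∀ k, k ≠ Fin.last n → θ' k ∈ Set.Ioc (-π) π)
    (h : ∀ k, (sVar (n + 1) hN φ θ k : Angle) = sVar (n + 1) hN φ θ' k) : θ = θ' := by
  have hconst := Fin.apply_eq_apply_last_of_apply_add_one_eq
    (f := fun k => (θ k : Angle) - θ' k) fun k => by
      have := sub_eq_zero.mpr (h k)
      simp only [sVar_eq, Real.Angle.coe_add, Real.Angle.coe_sub] at this
      rw [← sub_eq_zero, ← this]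
      abel
  funext j
  by_cases hj : j = Fin.last n
  · rw [hj, hθ, hθ']
  · have := hconst j
    simp only [hθ, hθ', sub_self, Real.Angle.coe_zero, sub_eq_zero] at this
    rw [← Real.Angle.toReal_coe_eq_self_iff_mem_Ioc.mpr (hdom j hj),
      ← Real.Angle.toReal_coe_eq_self_iff_mem_Ioc.mpr (hdom' j hj), this]

end XY

/-- for odd `N ≥ 3`, the number of local minima of `F_φ`
(with `θ_N = 0` fixed) whose free coordinates lie in the fundamental domain
`(-π, π]` is at most `N`. -/
theorem stmt5 (N : ℕ) (hN : 3 ≤ N) (φ : Fin N → ℝ) :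
    let S : Set (Fin N → ℝ) :=
      {θ | θ (lastIdx N (by omega)) = 0 ∧
        (∀ k : Fin N, (k : ℕ) < N - 1 → θ k ∈ Set.Ioc (-π) π) ∧
        IsLocalMin (FxyFixed N (by omega) φ) θ}
    S.Finite ∧ S.ncard ≤ N := by
  intro S
  obtain ⟨n, rfl⟩ : ∃ n, N = n + 1 := ⟨N - 1, by omega⟩
  have hn : 2 ≤ n := by omega
  set f : (Fin (n + 1) → ℝ) → Angle := fun θ => sVar (n + 1) (by omega) φ θ 0
  have hmaps : Set.MapsTo f S {ψ | (n + 1) • ψ = ((∑ k, φ k : ℝ) : Angle)} :=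
    fun θ ⟨hθ, _, hmin⟩ => hmin.nsmul_coe_sVar_eq hn hθ
  have hinj : Set.InjOn f S := fun θ ⟨hθ, hdom, hmin⟩ θ' ⟨hθ', hdom', hmin'⟩ hf =>
    eq_of_coe_sVar_eq hθ hθ' (fun k hk => hdom k (by simpa using Fin.val_lt_last hk))
      (fun k hk => hdom' k (by simpa using Fin.val_lt_last hk))
      fun k => by rw [hmin.coe_sVar_eq hn hθ, hmin'.coe_sVar_eq hn hθ']; exact hf
  obtain ⟨hfin, hcard⟩ := Real.Angle.finite_and_ncard_setOf_nsmul_eq_le n.succ_ne_zero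
    ((∑ k, φ k : ℝ) : Angle)
  exact ⟨hfin.of_injOn hmaps hinj,
    (Set.ncard_le_ncard_of_injOn f hmaps hinj hfin).trans hcard⟩
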